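/- arXiv:2102.08164 — 2 statements merged into one kernel-verified Lean document; each statement's English description precedes it below -/
import Mathlib

section
/- If f : ℝ → ℝ is continuously differentiable and f' is Lipschitz continuous with constant L, then for any x₁, x₂, x₃, x₄ ∈ ℝ there exists ξ in the closed interval [min(x₁,x₂,x₃,x₄), max(x₁,x₂,x₃,x₄)] and a remainder R such that f(x₁) - f(x₂) - f(x₃) + f(x₄) = (x₁ - x₂ - x₃ + x₄)·f'(ξ) + R, with |R| ≤ (L/2)·(|x₁-x₂| + |x₃-x₄|)·(|x₁-x₃| + |x₂-x₄|). -/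
/-!
Apply the mean value theorem to `t ↦ f (x₂ + t (x₁ - x₂)) - f (x₄ + t (x₃ - x₄))` on `[0, 1]`:
the second difference equals `(x₁ - x₂) f'(ξ₁) - (x₃ - x₄) f'(ξ₂)` for two points `ξ₁, ξ₂` taken
at the same parameter `τ`, so `|ξ₁ - ξ₂| ≤ |x₁ - x₃| + |x₂ - x₄|`. Writing
`a p - b q = (a - b) p + b (p - q) = (a - b) q + a (p - q)` and keeping the form whose error term
carries the smaller of `|a|, |b|` gives the remainder bound, since `min |a| |b| ≤ (|a| + |b|) / 2`.
-/

open Set AffineMap Real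

lemma exists_mem_Ioo_sub_sub_add_eq {f : ℝ → ℝ} (hf : Differentiable ℝ f) (x₁ x₂ x₃ x₄ : ℝ) :
    ∃ τ ∈ Ioo (0 : ℝ) 1, f x₁ - f x₂ - f x₃ + f x₄ =
      (x₁ - x₂) * deriv f (lineMap x₂ x₁ τ) - (x₃ - x₄) * deriv f (lineMap x₄ x₃ τ) := by
  set F : ℝ → ℝ := fun t ↦ f (lineMap x₂ x₁ t) - f (lineMap x₄ x₃ t)
  have hF : ∀ t, HasDerivAt F
      ((x₁ - x₂) * deriv f (lineMap x₂ x₁ t) - (x₃ - x₄) * deriv f (lineMap x₄ x₃ t)) t := by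
    intro t
    have h₁ := (hf _).hasDerivAt.comp t (hasDerivAt_lineMap (a := x₂) (b := x₁))
    have h₂ := (hf _).hasDerivAt.comp t (hasDerivAt_lineMap (a := x₄) (b := x₃))
    exact (h₁.sub h₂).congr_deriv (by ring)
  obtain ⟨τ, hτ, hslope⟩ := exists_hasDerivAt_eq_slope F _ one_pos
    (fun t _ ↦ (hF t).continuousAt.continuousWithinAt) (fun t _ ↦ hF t)
  refine ⟨τ, hτ, ?_⟩
  simp only [hslope, F, lineMap_apply_zero, lineMap_apply_one]
  ring

lemma abs_lineMap_sub_lineMap_le {a b c d t : ℝ} (ht : t ∈ Icc (0 : ℝ) 1) :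
    |lineMap a b t - lineMap c d t| ≤ max |a - c| |b - d| := by
  set M := max |a - c| |b - d|
  have hconv := (convex_Icc (-M) M).lineMap_mem (abs_le.mp (le_max_left |a - c| |b - d|))
    (abs_le.mp (le_max_right |a - c| |b - d|)) ht
  rw [← vsub_eq_sub, lineMap_vsub_lineMap]
  exact abs_le.mpr hconv

lemma exists_mem_pair_mul_sub_mul_eq {α : Type*} (g : α → ℝ) (a b : ℝ) (u v : α) :
    ∃ w ∈ ({u, v} : Set α), ∃ R, a * g u - b * g v = (a - b) * g w + R ∧
      |R| ≤ min |a| |b| * |g u - g v| := by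
  rcases le_total |b| |a| with hba | hab
  · refine ⟨u, by simp, b * (g u - g v), by ring, ?_⟩
    rw [abs_mul, min_eq_right hba]
  · refine ⟨v, by simp, a * (g u - g v), by ring, ?_⟩
    rw [abs_mul, min_eq_left hab]

theorem stmt_0 (f : ℝ → ℝ) (L : ℝ) (hf : ContDiff ℝ 1 f)
    (hL : ∀ x y : ℝ, |deriv f x - deriv f y| ≤ L * |x - y|)
    (x₁ x₂ x₃ x₄ : ℝ) :
    ∃ ξ ∈ Set.Icc (min (min x₁ x₂) (min x₃ x₄)) (max (max x₁ x₂) (max x₃ x₄)),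
      ∃ R : ℝ,
        f x₁ - f x₂ - f x₃ + f x₄ = (x₁ - x₂ - x₃ + x₄) * deriv f ξ + R ∧
        |R| ≤ L / 2 * (|x₁ - x₂| + |x₃ - x₄|) * (|x₁ - x₃| + |x₂ - x₄|) := by
  have hL₀ : 0 ≤ L := by simpa using (abs_nonneg _).trans (hL 0 1)
  obtain ⟨τ, hτ, hmvt⟩ := exists_mem_Ioo_sub_sub_add_eq (hf.differentiable one_ne_zero) x₁ x₂ x₃ x₄
  obtain ⟨ξ, hξ, R, hR, hRle⟩ := exists_mem_pair_mul_sub_mul_eq (deriv f) (x₁ - x₂) (x₃ - x₄)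
    (lineMap x₂ x₁ τ) (lineMap x₄ x₃ τ)
  have hderiv : |deriv f (lineMap x₂ x₁ τ) - deriv f (lineMap x₄ x₃ τ)| ≤
      L * (|x₁ - x₃| + |x₂ - x₄|) := calc
    _ ≤ L * |lineMap x₂ x₁ τ - lineMap x₄ x₃ τ| := hL _ _
    _ ≤ L * max |x₂ - x₄| |x₁ - x₃| := by
      gcongr; exact abs_lineMap_sub_lineMap_le (Ioo_subset_Icc_self hτ)
    _ ≤ L * (|x₁ - x₃| + |x₂ - x₄|) := by
      rw [add_comm]; gcongr; exact max_le_add_of_nonneg (abs_nonneg _) (abs_nonneg _)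
  refine ⟨ξ, ?_, R, by rw [hmvt, hR]; ring, ?_⟩
  · have hIcc : Convex ℝ (Icc (min (min x₁ x₂) (min x₃ x₄)) (max (max x₁ x₂) (max x₃ x₄))) :=
      convex_Icc _ _
    rcases hξ with rfl | rfl <;>
      exact hIcc.lineMap_mem (by simp) (by simp) (Ioo_subset_Icc_self hτ)
  · calc |R| ≤ min |x₁ - x₂| |x₃ - x₄| * (L * (|x₁ - x₃| + |x₂ - x₄|)) :=
          hRle.trans (by gcongr)
      _ ≤ (|x₁ - x₂| + |x₃ - x₄|) / 2 * (L * (|x₁ - x₃| + |x₂ - x₄|)) := by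
          gcongr
          linarith [min_le_left |x₁ - x₂| |x₃ - x₄|, min_le_right |x₁ - x₂| |x₃ - x₄|]
      _ = L / 2 * (|x₁ - x₂| + |x₃ - x₄|) * (|x₁ - x₃| + |x₂ - x₄|) := by ring
end

section
/- Let V_ℓ, C_ℓ, Ṽ_ℓ, C̃_ℓ > 0 for ℓ = 0,...,L and ε > 0. Then 2ε⁻²·(Σ_{ℓ=0}^{L} √(C̃_ℓ V_ℓ) + √((C_ℓ + C̃_ℓ)·Ṽ_ℓ))² ≤ [2ε⁻²·(Σ_{ℓ=0}^{L} √(C_ℓ V_ℓ))²] · max_{0≤ℓ≤L} (C̃_ℓ/C_ℓ)·(1 + √((C_ℓ/C̃_ℓ + 1)·(Ṽ_ℓ/V_ℓ)))². -/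
/-!
Level by level, the nested term factors as the standard one times the square root of the
level's cost ratio: `√(C̃ V) + √((C + C̃) Ṽ) = √(C V) · √(C̃/C) · (1 + √((C/C̃ + 1)(Ṽ/V)))`.
Bounding every ratio by their maximum and squaring the sum gives the claim.
-/

open Finset

theorem sq_sum_mul_sqrt_le_mul_sup' {ι : Type*} {s : Finset ι} (hs : s.Nonempty) {a f : ι → ℝ}
    (ha : ∀ i ∈ s, 0 ≤ a i) (hf : ∀ i ∈ s, 0 ≤ f i) :
    (∑ i ∈ s, a i * Real.sqrt (f i)) ^ 2 ≤ (∑ i ∈ s, a i) ^ 2 * s.sup' hs f := by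
  have hM : 0 ≤ s.sup' hs f :=
    let ⟨j, hj⟩ := hs
    (hf j hj).trans (le_sup' f hj)
  have hsum : ∑ i ∈ s, a i * Real.sqrt (f i) ≤ (∑ i ∈ s, a i) * Real.sqrt (s.sup' hs f) := by
    rw [sum_mul]
    exact sum_le_sum fun i hi =>
      mul_le_mul_of_nonneg_left (Real.sqrt_le_sqrt (le_sup' f hi)) (ha i hi)
  calc (∑ i ∈ s, a i * Real.sqrt (f i)) ^ 2
      ≤ ((∑ i ∈ s, a i) * Real.sqrt (s.sup' hs f)) ^ 2 :=
        pow_le_pow_left₀ (sum_nonneg fun i hi => mul_nonneg (ha i hi) (Real.sqrt_nonneg _))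
          hsum 2
    _ = (∑ i ∈ s, a i) ^ 2 * s.sup' hs f := by
        rw [mul_pow, Real.sq_sqrt hM]

theorem sqrt_mul_add_sqrt_mul_eq_sqrt_mul_mul_sqrt {C V Ct Vt : ℝ}
    (hC : 0 < C) (hV : 0 < V) (hCt : 0 < Ct) :
    Real.sqrt (Ct * V) + Real.sqrt ((C + Ct) * Vt)
      = Real.sqrt (C * V) *
          Real.sqrt (Ct / C * (1 + Real.sqrt ((C / Ct + 1) * (Vt / V))) ^ 2) := by
  have hstd : Real.sqrt (C * V) * Real.sqrt (Ct / C) = Real.sqrt (Ct * V) := by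
    rw [← Real.sqrt_mul (by positivity)]
    congr 1
    field_simp
  have hnested : Real.sqrt (Ct * V) * Real.sqrt ((C / Ct + 1) * (Vt / V))
      = Real.sqrt ((C + Ct) * Vt) := by
    rw [← Real.sqrt_mul (by positivity)]
    congr 1
    field_simp
  rw [Real.sqrt_mul (x := Ct / C) (by positivity), Real.sqrt_sq (by positivity), ← mul_assoc,
    hstd, mul_add, mul_one, hnested]

theorem stmt_5_general (L : ℕ) (V C Vt Ct : ℕ → ℝ) (ε : ℝ)
    (hV : ∀ ℓ ≤ L, 0 < V ℓ) (hC : ∀ ℓ ≤ L, 0 < C ℓ)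
    (hCt : ∀ ℓ ≤ L, 0 < Ct ℓ) :
    2 * ε⁻¹ ^ 2 *
        (∑ ℓ ∈ Finset.range (L + 1),
          (Real.sqrt (Ct ℓ * V ℓ) + Real.sqrt ((C ℓ + Ct ℓ) * Vt ℓ))) ^ 2
      ≤ (2 * ε⁻¹ ^ 2 * (∑ ℓ ∈ Finset.range (L + 1), Real.sqrt (C ℓ * V ℓ)) ^ 2) *
          (Finset.range (L + 1)).sup' Finset.nonempty_range_add_one
            (fun ℓ => Ct ℓ / C ℓ *
              (1 + Real.sqrt ((C ℓ / Ct ℓ + 1) * (Vt ℓ / V ℓ))) ^ 2) := by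
  have hlevel : ∀ ℓ ∈ range (L + 1), ℓ ≤ L := fun ℓ hℓ => Nat.lt_succ_iff.1 (mem_range.1 hℓ)
  rw [sum_congr rfl fun ℓ hℓ => sqrt_mul_add_sqrt_mul_eq_sqrt_mul_mul_sqrt
    (hC ℓ (hlevel ℓ hℓ)) (hV ℓ (hlevel ℓ hℓ)) (hCt ℓ (hlevel ℓ hℓ)), mul_assoc (2 * ε⁻¹ ^ 2)]
  refine mul_le_mul_of_nonneg_left
    (sq_sum_mul_sqrt_le_mul_sup' _ (fun _ _ => Real.sqrt_nonneg _) fun ℓ hℓ => ?_) (by positivity)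
  have := hC ℓ (hlevel ℓ hℓ)
  have := hCt ℓ (hlevel ℓ hℓ)
  positivity

theorem stmt_5 (L : ℕ) (V C Vt Ct : ℕ → ℝ) (ε : ℝ) (hε : 0 < ε)
    (hV : ∀ ℓ ≤ L, 0 < V ℓ) (hC : ∀ ℓ ≤ L, 0 < C ℓ)
    (hVt : ∀ ℓ ≤ L, 0 < Vt ℓ) (hCt : ∀ ℓ ≤ L, 0 < Ct ℓ) :
    2 * ε⁻¹ ^ 2 *
        (∑ ℓ ∈ Finset.range (L + 1),
          (Real.sqrt (Ct ℓ * V ℓ) + Real.sqrt ((C ℓ + Ct ℓ) * Vt ℓ))) ^ 2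
      ≤ (2 * ε⁻¹ ^ 2 * (∑ ℓ ∈ Finset.range (L + 1), Real.sqrt (C ℓ * V ℓ)) ^ 2) *
          (Finset.range (L + 1)).sup' Finset.nonempty_range_add_one
            (fun ℓ => Ct ℓ / C ℓ *
              (1 + Real.sqrt ((C ℓ / Ct ℓ + 1) * (Vt ℓ / V ℓ))) ^ 2) :=
  stmt_5_general L V C Vt Ct ε hV hC hCt
end
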